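/- Let g be the 8-dimensional nilpotent Lie algebra (0,0,12,13,14,15,16,36−45−27). Then every closed 2-form ω ∈ Λ²g* satisfies ω⁴ = 0 in Λ⁸g*; in particular g admits no symplectic form. -/
import Mathlib


/- STATEMENT 13: in the 8-dimensional nilpotent Lie algebra
`(0,0,12,13,14,15,16,36−45−27)`, every closed 2-form `ω` satisfies `ω⁴ = 0`; in
particular there is no symplectic form.  Forms are modelled in `Λ•g*` with
`g* = Fin 8 → ℝ`. -/

noncomputable section

open ExteriorAlgebra

/-- The basis 1-forms `e₁,…,e₈` (0-indexed). -/
def e (i : Fin 8) : ExteriorAlgebra ℝ (Fin 8 → ℝ) := ι ℝ (Pi.single i 1)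

/-- The values of `d` on the basis: `(0,0,12,13,14,15,16,36−45−27)` (0-indexed). -/
def D : Fin 8 → ExteriorAlgebra ℝ (Fin 8 → ℝ) :=
  ![0, 0, e 0 * e 1, e 0 * e 2, e 0 * e 3, e 0 * e 4, e 0 * e 5,
    e 2 * e 5 - e 3 * e 4 - e 1 * e 6]

/-- The 2-form `∑ k_{ij} e_i ∧ e_j` with coefficients `k`. -/
def twoForm (k : Fin 8 → Fin 8 → ℝ) : ExteriorAlgebra ℝ (Fin 8 → ℝ) :=
  ∑ i, ∑ j, k i j • (e i * e j)

/-- `d` of the 2-form with coefficients `k` (derivation rule). -/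
def dTwo (k : Fin 8 → Fin 8 → ℝ) : ExteriorAlgebra ℝ (Fin 8 → ℝ) :=
  ∑ i, ∑ j, k i j • (D i * e j - e i * D j)


/-! ### Auxiliary machinery -/

lemma e_sq (i : Fin 8) : e i * e i = 0 := ι_sq_zero _

lemma e_sq' (i : Fin 8) (x : ExteriorAlgebra ℝ (Fin 8 → ℝ)) : e i * (e i * x) = 0 := by
  rw [← mul_assoc, e_sq, zero_mul]

lemma e_comm (i j : Fin 8) : e i * e j = -(e j * e i) :=
  eq_neg_of_add_eq_zero_left (ι_add_mul_swap _ _)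

lemma e_comm' (i j : Fin 8) (x : ExteriorAlgebra ℝ (Fin 8 → ℝ)) :
    e i * (e j * x) = -(e j * (e i * x)) := by
  rw [← mul_assoc, e_comm, neg_mul, mul_assoc]

lemma sw10 : e 1 * e 0 = -(e 0 * e 1) := e_comm _ _
lemma sw20 : e 2 * e 0 = -(e 0 * e 2) := e_comm _ _
lemma sw30 : e 3 * e 0 = -(e 0 * e 3) := e_comm _ _
lemma sw40 : e 4 * e 0 = -(e 0 * e 4) := e_comm _ _
lemma sw50 : e 5 * e 0 = -(e 0 * e 5) := e_comm _ _
lemma sw60 : e 6 * e 0 = -(e 0 * e 6) := e_comm _ _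
lemma sw70 : e 7 * e 0 = -(e 0 * e 7) := e_comm _ _
lemma sw21 : e 2 * e 1 = -(e 1 * e 2) := e_comm _ _
lemma sw31 : e 3 * e 1 = -(e 1 * e 3) := e_comm _ _
lemma sw41 : e 4 * e 1 = -(e 1 * e 4) := e_comm _ _
lemma sw51 : e 5 * e 1 = -(e 1 * e 5) := e_comm _ _
lemma sw61 : e 6 * e 1 = -(e 1 * e 6) := e_comm _ _
lemma sw71 : e 7 * e 1 = -(e 1 * e 7) := e_comm _ _
lemma sw32 : e 3 * e 2 = -(e 2 * e 3) := e_comm _ _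
lemma sw42 : e 4 * e 2 = -(e 2 * e 4) := e_comm _ _
lemma sw52 : e 5 * e 2 = -(e 2 * e 5) := e_comm _ _
lemma sw62 : e 6 * e 2 = -(e 2 * e 6) := e_comm _ _
lemma sw72 : e 7 * e 2 = -(e 2 * e 7) := e_comm _ _
lemma sw43 : e 4 * e 3 = -(e 3 * e 4) := e_comm _ _
lemma sw53 : e 5 * e 3 = -(e 3 * e 5) := e_comm _ _
lemma sw63 : e 6 * e 3 = -(e 3 * e 6) := e_comm _ _
lemma sw73 : e 7 * e 3 = -(e 3 * e 7) := e_comm _ _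
lemma sw54 : e 5 * e 4 = -(e 4 * e 5) := e_comm _ _
lemma sw64 : e 6 * e 4 = -(e 4 * e 6) := e_comm _ _
lemma sw74 : e 7 * e 4 = -(e 4 * e 7) := e_comm _ _
lemma sw65 : e 6 * e 5 = -(e 5 * e 6) := e_comm _ _
lemma sw75 : e 7 * e 5 = -(e 5 * e 7) := e_comm _ _
lemma sw76 : e 7 * e 6 = -(e 6 * e 7) := e_comm _ _
lemma swl10 (x : ExteriorAlgebra ℝ (Fin 8 → ℝ)) : e 1 * (e 0 * x) = -(e 0 * (e 1 * x)) := e_comm' _ _ _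
lemma swl20 (x : ExteriorAlgebra ℝ (Fin 8 → ℝ)) : e 2 * (e 0 * x) = -(e 0 * (e 2 * x)) := e_comm' _ _ _
lemma swl30 (x : ExteriorAlgebra ℝ (Fin 8 → ℝ)) : e 3 * (e 0 * x) = -(e 0 * (e 3 * x)) := e_comm' _ _ _
lemma swl40 (x : ExteriorAlgebra ℝ (Fin 8 → ℝ)) : e 4 * (e 0 * x) = -(e 0 * (e 4 * x)) := e_comm' _ _ _
lemma swl50 (x : ExteriorAlgebra ℝ (Fin 8 → ℝ)) : e 5 * (e 0 * x) = -(e 0 * (e 5 * x)) := e_comm' _ _ _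
lemma swl60 (x : ExteriorAlgebra ℝ (Fin 8 → ℝ)) : e 6 * (e 0 * x) = -(e 0 * (e 6 * x)) := e_comm' _ _ _
lemma swl70 (x : ExteriorAlgebra ℝ (Fin 8 → ℝ)) : e 7 * (e 0 * x) = -(e 0 * (e 7 * x)) := e_comm' _ _ _
lemma swl21 (x : ExteriorAlgebra ℝ (Fin 8 → ℝ)) : e 2 * (e 1 * x) = -(e 1 * (e 2 * x)) := e_comm' _ _ _
lemma swl31 (x : ExteriorAlgebra ℝ (Fin 8 → ℝ)) : e 3 * (e 1 * x) = -(e 1 * (e 3 * x)) := e_comm' _ _ _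
lemma swl41 (x : ExteriorAlgebra ℝ (Fin 8 → ℝ)) : e 4 * (e 1 * x) = -(e 1 * (e 4 * x)) := e_comm' _ _ _
lemma swl51 (x : ExteriorAlgebra ℝ (Fin 8 → ℝ)) : e 5 * (e 1 * x) = -(e 1 * (e 5 * x)) := e_comm' _ _ _
lemma swl61 (x : ExteriorAlgebra ℝ (Fin 8 → ℝ)) : e 6 * (e 1 * x) = -(e 1 * (e 6 * x)) := e_comm' _ _ _
lemma swl71 (x : ExteriorAlgebra ℝ (Fin 8 → ℝ)) : e 7 * (e 1 * x) = -(e 1 * (e 7 * x)) := e_comm' _ _ _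
lemma swl32 (x : ExteriorAlgebra ℝ (Fin 8 → ℝ)) : e 3 * (e 2 * x) = -(e 2 * (e 3 * x)) := e_comm' _ _ _
lemma swl42 (x : ExteriorAlgebra ℝ (Fin 8 → ℝ)) : e 4 * (e 2 * x) = -(e 2 * (e 4 * x)) := e_comm' _ _ _
lemma swl52 (x : ExteriorAlgebra ℝ (Fin 8 → ℝ)) : e 5 * (e 2 * x) = -(e 2 * (e 5 * x)) := e_comm' _ _ _
lemma swl62 (x : ExteriorAlgebra ℝ (Fin 8 → ℝ)) : e 6 * (e 2 * x) = -(e 2 * (e 6 * x)) := e_comm' _ _ _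
lemma swl72 (x : ExteriorAlgebra ℝ (Fin 8 → ℝ)) : e 7 * (e 2 * x) = -(e 2 * (e 7 * x)) := e_comm' _ _ _
lemma swl43 (x : ExteriorAlgebra ℝ (Fin 8 → ℝ)) : e 4 * (e 3 * x) = -(e 3 * (e 4 * x)) := e_comm' _ _ _
lemma swl53 (x : ExteriorAlgebra ℝ (Fin 8 → ℝ)) : e 5 * (e 3 * x) = -(e 3 * (e 5 * x)) := e_comm' _ _ _
lemma swl63 (x : ExteriorAlgebra ℝ (Fin 8 → ℝ)) : e 6 * (e 3 * x) = -(e 3 * (e 6 * x)) := e_comm' _ _ _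
lemma swl73 (x : ExteriorAlgebra ℝ (Fin 8 → ℝ)) : e 7 * (e 3 * x) = -(e 3 * (e 7 * x)) := e_comm' _ _ _
lemma swl54 (x : ExteriorAlgebra ℝ (Fin 8 → ℝ)) : e 5 * (e 4 * x) = -(e 4 * (e 5 * x)) := e_comm' _ _ _
lemma swl64 (x : ExteriorAlgebra ℝ (Fin 8 → ℝ)) : e 6 * (e 4 * x) = -(e 4 * (e 6 * x)) := e_comm' _ _ _
lemma swl74 (x : ExteriorAlgebra ℝ (Fin 8 → ℝ)) : e 7 * (e 4 * x) = -(e 4 * (e 7 * x)) := e_comm' _ _ _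
lemma swl65 (x : ExteriorAlgebra ℝ (Fin 8 → ℝ)) : e 6 * (e 5 * x) = -(e 5 * (e 6 * x)) := e_comm' _ _ _
lemma swl75 (x : ExteriorAlgebra ℝ (Fin 8 → ℝ)) : e 7 * (e 5 * x) = -(e 5 * (e 7 * x)) := e_comm' _ _ _
lemma swl76 (x : ExteriorAlgebra ℝ (Fin 8 → ℝ)) : e 7 * (e 6 * x) = -(e 6 * (e 7 * x)) := e_comm' _ _ _

lemma D0 : D 0 = 0 := rfl
lemma D1 : D 1 = 0 := rfl
lemma D2 : D 2 = e 0 * e 1 := rfl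
lemma D3 : D 3 = e 0 * e 2 := rfl
lemma D4 : D 4 = e 0 * e 3 := rfl
lemma D5 : D 5 = e 0 * e 4 := rfl
lemma D6 : D 6 = e 0 * e 5 := rfl
lemma D7 : D 7 = e 2 * e 5 - e 3 * e 4 - e 1 * e 6 := rfl

def Fam (a b c : Fin 8) : ∀ i : ℕ, (Fin 8 → ℝ) [⋀^Fin i]→ₗ[ℝ] ℝ
  | 3 => (Matrix.detRowAlternating).compLinearMap (LinearMap.funLeft ℝ ℝ ![a, b, c])
  | _ => 0

def coef3 (a b c : Fin 8) : ExteriorAlgebra ℝ (Fin 8 → ℝ) →ₗ[ℝ] ℝ :=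
  liftAlternating (Fam a b c)

lemma coef3_eee (a b c x y z : Fin 8) :
    coef3 a b c (e x * (e y * e z)) =
      Matrix.det (Matrix.of fun p q =>
        (![(Pi.single x 1 : Fin 8 → ℝ), Pi.single y 1, Pi.single z 1] p) (![a, b, c] q)) := by
  unfold coef3 e
  rw [liftAlternating_ι_mul, liftAlternating_ι_mul, liftAlternating_ι]
  rfl

def dForm (k : Fin 8 → Fin 8 → ℝ) : ExteriorAlgebra ℝ (Fin 8 → ℝ) :=
    ((k 1 3 - k 3 1)) • (e 0 * (e 1 * (e 2)))
  + ((k 1 4 - k 4 1) + (k 2 3 - k 3 2)) • (e 0 * (e 1 * (e 3)))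
  + ((k 1 5 - k 5 1) + (k 2 4 - k 4 2)) • (e 0 * (e 1 * (e 4)))
  + ((k 1 6 - k 6 1) + (k 2 5 - k 5 2)) • (e 0 * (e 1 * (e 5)))
  + ((k 0 7 - k 7 0) + (k 2 6 - k 6 2)) • (e 0 * (e 1 * (e 6)))
  + ((k 2 7 - k 7 2)) • (e 0 * (e 1 * (e 7)))
  + ((k 2 4 - k 4 2)) • (e 0 * (e 2 * (e 3)))
  + ((k 2 5 - k 5 2) + (k 3 4 - k 4 3)) • (e 0 * (e 2 * (e 4)))
  + (-(k 0 7 - k 7 0) + (k 2 6 - k 6 2) + (k 3 5 - k 5 3)) • (e 0 * (e 2 * (e 5)))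
  + ((k 3 6 - k 6 3)) • (e 0 * (e 2 * (e 6)))
  + ((k 3 7 - k 7 3)) • (e 0 * (e 2 * (e 7)))
  + ((k 0 7 - k 7 0) + (k 3 5 - k 5 3)) • (e 0 * (e 3 * (e 4)))
  + ((k 3 6 - k 6 3) + (k 4 5 - k 5 4)) • (e 0 * (e 3 * (e 5)))
  + ((k 4 6 - k 6 4)) • (e 0 * (e 3 * (e 6)))
  + ((k 4 7 - k 7 4)) • (e 0 * (e 3 * (e 7)))
  + ((k 4 6 - k 6 4)) • (e 0 * (e 4 * (e 5)))
  + ((k 5 6 - k 6 5)) • (e 0 * (e 4 * (e 6)))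
  + ((k 5 7 - k 7 5)) • (e 0 * (e 4 * (e 7)))
  + ((k 6 7 - k 7 6)) • (e 0 * (e 5 * (e 7)))
  + (-(k 1 7 - k 7 1)) • (e 1 * (e 2 * (e 5)))
  + (-(k 2 7 - k 7 2)) • (e 1 * (e 2 * (e 6)))
  + ((k 1 7 - k 7 1)) • (e 1 * (e 3 * (e 4)))
  + (-(k 3 7 - k 7 3)) • (e 1 * (e 3 * (e 6)))
  + (-(k 4 7 - k 7 4)) • (e 1 * (e 4 * (e 6)))
  + (-(k 5 7 - k 7 5)) • (e 1 * (e 5 * (e 6)))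
  + ((k 2 7 - k 7 2)) • (e 2 * (e 3 * (e 4)))
  + ((k 3 7 - k 7 3)) • (e 2 * (e 3 * (e 5)))
  + ((k 4 7 - k 7 4)) • (e 2 * (e 4 * (e 5)))
  + (-(k 6 7 - k 7 6)) • (e 2 * (e 5 * (e 6)))
  + ((k 5 7 - k 7 5)) • (e 3 * (e 4 * (e 5)))
  + ((k 6 7 - k 7 6)) • (e 3 * (e 4 * (e 6)))

def Aform (k : Fin 8 → Fin 8 → ℝ) : ExteriorAlgebra ℝ (Fin 8 → ℝ) :=
    ((k 0 1 - k 1 0)) • (e 0 * e 1)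
  + ((k 0 2 - k 2 0)) • (e 0 * e 2)
  + ((k 0 3 - k 3 0)) • (e 0 * e 3)
  + ((k 0 4 - k 4 0)) • (e 0 * e 4)
  + ((k 0 5 - k 5 0)) • (e 0 * e 5)
  + ((k 0 6 - k 6 0)) • (e 0 * e 6)
  + ((k 1 2 - k 2 1)) • (e 1 * e 2)
  + ((k 2 3 - k 3 2)) • (e 2 * e 3)
  + (-((k 2 3 - k 3 2))) • (e 1 * e 4)
  + ((k 1 6 - k 6 1)) • (e 1 * e 6)
  + (-((k 1 6 - k 6 1))) • (e 2 * e 5)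
  + ((k 1 6 - k 6 1)) • (e 3 * e 4)

def Cform (k : Fin 8 → Fin 8 → ℝ) : ExteriorAlgebra ℝ (Fin 8 → ℝ) :=
    ((2) * (k 0 1 - k 1 0) * (k 2 3 - k 3 2) + (2) * (k 0 3 - k 3 0) * (k 1 2 - k 2 1)) • (e 0 * (e 1 * (e 2 * (e 3))))
  + ((2) * (k 0 2 - k 2 0) * (k 2 3 - k 3 2) + (2) * (k 0 4 - k 4 0) * (k 1 2 - k 2 1)) • (e 0 * (e 1 * (e 2 * (e 4))))
  + ((-2) * (k 0 1 - k 1 0) * (k 1 6 - k 6 1) + (2) * (k 0 5 - k 5 0) * (k 1 2 - k 2 1)) • (e 0 * (e 1 * (e 2 * (e 5))))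
  + ((-2) * (k 0 2 - k 2 0) * (k 1 6 - k 6 1) + (2) * (k 0 6 - k 6 0) * (k 1 2 - k 2 1)) • (e 0 * (e 1 * (e 2 * (e 6))))
  + ((2) * (k 0 1 - k 1 0) * (k 1 6 - k 6 1) + (2) * (k 0 3 - k 3 0) * (k 2 3 - k 3 2)) • (e 0 * (e 1 * (e 3 * (e 4))))
  + ((-2) * (k 0 3 - k 3 0) * (k 1 6 - k 6 1)) • (e 0 * (e 1 * (e 3 * (e 6))))
  + ((-2) * (k 0 5 - k 5 0) * (k 2 3 - k 3 2)) • (e 0 * (e 1 * (e 4 * (e 5))))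
  + ((-2) * (k 0 4 - k 4 0) * (k 1 6 - k 6 1) + (-2) * (k 0 6 - k 6 0) * (k 2 3 - k 3 2)) • (e 0 * (e 1 * (e 4 * (e 6))))
  + ((-2) * (k 0 5 - k 5 0) * (k 1 6 - k 6 1)) • (e 0 * (e 1 * (e 5 * (e 6))))
  + ((2) * (k 0 2 - k 2 0) * (k 1 6 - k 6 1) + (2) * (k 0 4 - k 4 0) * (k 2 3 - k 3 2)) • (e 0 * (e 2 * (e 3 * (e 4))))
  + ((2) * (k 0 3 - k 3 0) * (k 1 6 - k 6 1) + (2) * (k 0 5 - k 5 0) * (k 2 3 - k 3 2)) • (e 0 * (e 2 * (e 3 * (e 5))))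
  + ((2) * (k 0 6 - k 6 0) * (k 2 3 - k 3 2)) • (e 0 * (e 2 * (e 3 * (e 6))))
  + ((2) * (k 0 4 - k 4 0) * (k 1 6 - k 6 1)) • (e 0 * (e 2 * (e 4 * (e 5))))
  + ((-2) * (k 0 6 - k 6 0) * (k 1 6 - k 6 1)) • (e 0 * (e 2 * (e 5 * (e 6))))
  + ((2) * (k 0 5 - k 5 0) * (k 1 6 - k 6 1)) • (e 0 * (e 3 * (e 4 * (e 5))))
  + ((2) * (k 0 6 - k 6 0) * (k 1 6 - k 6 1)) • (e 0 * (e 3 * (e 4 * (e 6))))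
  + ((2) * (k 1 2 - k 2 1) * (k 1 6 - k 6 1) + (-2) * (k 2 3 - k 3 2) * (k 2 3 - k 3 2)) • (e 1 * (e 2 * (e 3 * (e 4))))
  + ((2) * (k 1 6 - k 6 1) * (k 2 3 - k 3 2)) • (e 1 * (e 2 * (e 3 * (e 6))))
  + ((-2) * (k 1 6 - k 6 1) * (k 2 3 - k 3 2)) • (e 1 * (e 2 * (e 4 * (e 5))))
  + ((-2) * (k 1 6 - k 6 1) * (k 1 6 - k 6 1)) • (e 1 * (e 2 * (e 5 * (e 6))))
  + ((2) * (k 1 6 - k 6 1) * (k 1 6 - k 6 1)) • (e 1 * (e 3 * (e 4 * (e 6))))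
  + ((-2) * (k 1 6 - k 6 1) * (k 1 6 - k 6 1)) • (e 2 * (e 3 * (e 4 * (e 5))))

set_option maxHeartbeats 4000000 in
lemma dTwo_eq (k : Fin 8 → Fin 8 → ℝ) : dTwo k = dForm k := by
  simp only [dTwo, Fin.sum_univ_eight, D0, D1, D2, D3, D4, D5, D6, D7, mul_sub, sub_mul, mul_add, add_mul, mul_zero, zero_mul, mul_assoc, e_sq, e_sq', sw10, sw20, sw30, sw40, sw50, sw60, sw70, sw21, sw31, sw41, sw51, sw61, sw71, sw32, sw42, sw52, sw62, sw72, sw43, sw53, sw63, sw73, sw54, sw64, sw74, sw65, sw75, sw76, swl10, swl20, swl30, swl40, swl50, swl60, swl70, swl21, swl31, swl41, swl51, swl61, swl71, swl32, swl42, swl52, swl62, swl72, swl43, swl53, swl63, swl73, swl54, swl64, swl74, swl65, swl75, swl76, mul_neg, neg_mul, neg_neg, smul_mul_assoc, mul_smul_comm, smul_smul]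
  unfold dForm
  match_scalars <;> ring

set_option maxHeartbeats 4000000 in
lemma AA_eq (k : Fin 8 → Fin 8 → ℝ) : Aform k * Aform k = Cform k := by
  unfold Aform Cform
  simp only [mul_sub, sub_mul, mul_add, add_mul, mul_zero, zero_mul, mul_assoc, e_sq, e_sq', sw10, sw20, sw30, sw40, sw50, sw60, sw70, sw21, sw31, sw41, sw51, sw61, sw71, sw32, sw42, sw52, sw62, sw72, sw43, sw53, sw63, sw73, sw54, sw64, sw74, sw65, sw75, sw76, swl10, swl20, swl30, swl40, swl50, swl60, swl70, swl21, swl31, swl41, swl51, swl61, swl71, swl32, swl42, swl52, swl62, swl72, swl43, swl53, swl63, swl73, swl54, swl64, swl74, swl65, swl75, swl76, mul_neg, neg_mul, neg_neg, smul_mul_assoc, mul_smul_comm, smul_smul]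
  match_scalars <;> ring

set_option maxHeartbeats 8000000 in
lemma CC_eq (k : Fin 8 → Fin 8 → ℝ) : Cform k * Cform k = 0 := by
  unfold Cform
  simp only [mul_sub, sub_mul, mul_add, add_mul, mul_zero, zero_mul, mul_assoc, e_sq, e_sq', sw10, sw20, sw30, sw40, sw50, sw60, sw70, sw21, sw31, sw41, sw51, sw61, sw71, sw32, sw42, sw52, sw62, sw72, sw43, sw53, sw63, sw73, sw54, sw64, sw74, sw65, sw75, sw76, swl10, swl20, swl30, swl40, swl50, swl60, swl70, swl21, swl31, swl41, swl51, swl61, swl71, swl32, swl42, swl52, swl62, swl72, swl43, swl53, swl63, swl73, swl54, swl64, swl74, swl65, swl75, swl76, mul_neg, neg_mul, neg_neg, smul_mul_assoc, mul_smul_comm, smul_smul, smul_zero, smul_neg, add_zero, zero_add, neg_zero]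

set_option maxHeartbeats 4000000 in
theorem main_aux : ∀ k : Fin 8 → Fin 8 → ℝ, dTwo k = 0 → twoForm k ^ 4 = 0 := by
  intro k hd
  rw [dTwo_eq] at hd
  have hc : ∀ a b c : Fin 8, coef3 a b c (dForm k) = 0 := by
    intro a b c; rw [hd]; simp
  have h012 := hc 0 1 2
  simp (config := { decide := true }) only [dForm, map_add, map_smul, map_zero, coef3_eee, Matrix.det_fin_three, Matrix.of_apply, Matrix.cons_val', Matrix.cons_val_zero, Matrix.cons_val_one, Matrix.cons_val_two, Matrix.cons_val_succ, Matrix.head_cons, Matrix.empty_val', Matrix.cons_val_fin_one, Matrix.head_fin_const, Pi.single_apply, Matrix.vecHead, Matrix.vecTail, Function.comp, Fin.isValue, if_true, if_false, mul_one, mul_zero, one_mul, zero_mul, sub_zero, zero_sub, add_zero, zero_add, mul_neg, neg_zero, smul_zero, smul_eq_mul, neg_neg, neg_add_rev] at h012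
  have h023 := hc 0 2 3
  simp (config := { decide := true }) only [dForm, map_add, map_smul, map_zero, coef3_eee, Matrix.det_fin_three, Matrix.of_apply, Matrix.cons_val', Matrix.cons_val_zero, Matrix.cons_val_one, Matrix.cons_val_two, Matrix.cons_val_succ, Matrix.head_cons, Matrix.empty_val', Matrix.cons_val_fin_one, Matrix.head_fin_const, Pi.single_apply, Matrix.vecHead, Matrix.vecTail, Function.comp, Fin.isValue, if_true, if_false, mul_one, mul_zero, one_mul, zero_mul, sub_zero, zero_sub, add_zero, zero_add, mul_neg, neg_zero, smul_zero, smul_eq_mul, neg_neg, neg_add_rev] at h023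
  have h014 := hc 0 1 4
  simp (config := { decide := true }) only [dForm, map_add, map_smul, map_zero, coef3_eee, Matrix.det_fin_three, Matrix.of_apply, Matrix.cons_val', Matrix.cons_val_zero, Matrix.cons_val_one, Matrix.cons_val_two, Matrix.cons_val_succ, Matrix.head_cons, Matrix.empty_val', Matrix.cons_val_fin_one, Matrix.head_fin_const, Pi.single_apply, Matrix.vecHead, Matrix.vecTail, Function.comp, Fin.isValue, if_true, if_false, mul_one, mul_zero, one_mul, zero_mul, sub_zero, zero_sub, add_zero, zero_add, mul_neg, neg_zero, smul_zero, smul_eq_mul, neg_neg, neg_add_rev] at h014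
  have h017 := hc 0 1 7
  simp (config := { decide := true }) only [dForm, map_add, map_smul, map_zero, coef3_eee, Matrix.det_fin_three, Matrix.of_apply, Matrix.cons_val', Matrix.cons_val_zero, Matrix.cons_val_one, Matrix.cons_val_two, Matrix.cons_val_succ, Matrix.head_cons, Matrix.empty_val', Matrix.cons_val_fin_one, Matrix.head_fin_const, Pi.single_apply, Matrix.vecHead, Matrix.vecTail, Function.comp, Fin.isValue, if_true, if_false, mul_one, mul_zero, one_mul, zero_mul, sub_zero, zero_sub, add_zero, zero_add, mul_neg, neg_zero, smul_zero, smul_eq_mul, neg_neg, neg_add_rev] at h017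
  have h125 := hc 1 2 5
  simp (config := { decide := true }) only [dForm, map_add, map_smul, map_zero, coef3_eee, Matrix.det_fin_three, Matrix.of_apply, Matrix.cons_val', Matrix.cons_val_zero, Matrix.cons_val_one, Matrix.cons_val_two, Matrix.cons_val_succ, Matrix.head_cons, Matrix.empty_val', Matrix.cons_val_fin_one, Matrix.head_fin_const, Pi.single_apply, Matrix.vecHead, Matrix.vecTail, Function.comp, Fin.isValue, if_true, if_false, mul_one, mul_zero, one_mul, zero_mul, sub_zero, zero_sub, add_zero, zero_add, mul_neg, neg_zero, smul_zero, smul_eq_mul, neg_neg, neg_add_rev] at h125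
  have h026 := hc 0 2 6
  simp (config := { decide := true }) only [dForm, map_add, map_smul, map_zero, coef3_eee, Matrix.det_fin_three, Matrix.of_apply, Matrix.cons_val', Matrix.cons_val_zero, Matrix.cons_val_one, Matrix.cons_val_two, Matrix.cons_val_succ, Matrix.head_cons, Matrix.empty_val', Matrix.cons_val_fin_one, Matrix.head_fin_const, Pi.single_apply, Matrix.vecHead, Matrix.vecTail, Function.comp, Fin.isValue, if_true, if_false, mul_one, mul_zero, one_mul, zero_mul, sub_zero, zero_sub, add_zero, zero_add, mul_neg, neg_zero, smul_zero, smul_eq_mul, neg_neg, neg_add_rev] at h026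
  have h027 := hc 0 2 7
  simp (config := { decide := true }) only [dForm, map_add, map_smul, map_zero, coef3_eee, Matrix.det_fin_three, Matrix.of_apply, Matrix.cons_val', Matrix.cons_val_zero, Matrix.cons_val_one, Matrix.cons_val_two, Matrix.cons_val_succ, Matrix.head_cons, Matrix.empty_val', Matrix.cons_val_fin_one, Matrix.head_fin_const, Pi.single_apply, Matrix.vecHead, Matrix.vecTail, Function.comp, Fin.isValue, if_true, if_false, mul_one, mul_zero, one_mul, zero_mul, sub_zero, zero_sub, add_zero, zero_add, mul_neg, neg_zero, smul_zero, smul_eq_mul, neg_neg, neg_add_rev] at h027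
  have h035 := hc 0 3 5
  simp (config := { decide := true }) only [dForm, map_add, map_smul, map_zero, coef3_eee, Matrix.det_fin_three, Matrix.of_apply, Matrix.cons_val', Matrix.cons_val_zero, Matrix.cons_val_one, Matrix.cons_val_two, Matrix.cons_val_succ, Matrix.head_cons, Matrix.empty_val', Matrix.cons_val_fin_one, Matrix.head_fin_const, Pi.single_apply, Matrix.vecHead, Matrix.vecTail, Function.comp, Fin.isValue, if_true, if_false, mul_one, mul_zero, one_mul, zero_mul, sub_zero, zero_sub, add_zero, zero_add, mul_neg, neg_zero, smul_zero, smul_eq_mul, neg_neg, neg_add_rev] at h035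
  have h036 := hc 0 3 6
  simp (config := { decide := true }) only [dForm, map_add, map_smul, map_zero, coef3_eee, Matrix.det_fin_three, Matrix.of_apply, Matrix.cons_val', Matrix.cons_val_zero, Matrix.cons_val_one, Matrix.cons_val_two, Matrix.cons_val_succ, Matrix.head_cons, Matrix.empty_val', Matrix.cons_val_fin_one, Matrix.head_fin_const, Pi.single_apply, Matrix.vecHead, Matrix.vecTail, Function.comp, Fin.isValue, if_true, if_false, mul_one, mul_zero, one_mul, zero_mul, sub_zero, zero_sub, add_zero, zero_add, mul_neg, neg_zero, smul_zero, smul_eq_mul, neg_neg, neg_add_rev] at h036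
  have h046 := hc 0 4 6
  simp (config := { decide := true }) only [dForm, map_add, map_smul, map_zero, coef3_eee, Matrix.det_fin_three, Matrix.of_apply, Matrix.cons_val', Matrix.cons_val_zero, Matrix.cons_val_one, Matrix.cons_val_two, Matrix.cons_val_succ, Matrix.head_cons, Matrix.empty_val', Matrix.cons_val_fin_one, Matrix.head_fin_const, Pi.single_apply, Matrix.vecHead, Matrix.vecTail, Function.comp, Fin.isValue, if_true, if_false, mul_one, mul_zero, one_mul, zero_mul, sub_zero, zero_sub, add_zero, zero_add, mul_neg, neg_zero, smul_zero, smul_eq_mul, neg_neg, neg_add_rev] at h046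
  have h037 := hc 0 3 7
  simp (config := { decide := true }) only [dForm, map_add, map_smul, map_zero, coef3_eee, Matrix.det_fin_three, Matrix.of_apply, Matrix.cons_val', Matrix.cons_val_zero, Matrix.cons_val_one, Matrix.cons_val_two, Matrix.cons_val_succ, Matrix.head_cons, Matrix.empty_val', Matrix.cons_val_fin_one, Matrix.head_fin_const, Pi.single_apply, Matrix.vecHead, Matrix.vecTail, Function.comp, Fin.isValue, if_true, if_false, mul_one, mul_zero, one_mul, zero_mul, sub_zero, zero_sub, add_zero, zero_add, mul_neg, neg_zero, smul_zero, smul_eq_mul, neg_neg, neg_add_rev] at h037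
  have h047 := hc 0 4 7
  simp (config := { decide := true }) only [dForm, map_add, map_smul, map_zero, coef3_eee, Matrix.det_fin_three, Matrix.of_apply, Matrix.cons_val', Matrix.cons_val_zero, Matrix.cons_val_one, Matrix.cons_val_two, Matrix.cons_val_succ, Matrix.head_cons, Matrix.empty_val', Matrix.cons_val_fin_one, Matrix.head_fin_const, Pi.single_apply, Matrix.vecHead, Matrix.vecTail, Function.comp, Fin.isValue, if_true, if_false, mul_one, mul_zero, one_mul, zero_mul, sub_zero, zero_sub, add_zero, zero_add, mul_neg, neg_zero, smul_zero, smul_eq_mul, neg_neg, neg_add_rev] at h047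
  have h057 := hc 0 5 7
  simp (config := { decide := true }) only [dForm, map_add, map_smul, map_zero, coef3_eee, Matrix.det_fin_three, Matrix.of_apply, Matrix.cons_val', Matrix.cons_val_zero, Matrix.cons_val_one, Matrix.cons_val_two, Matrix.cons_val_succ, Matrix.head_cons, Matrix.empty_val', Matrix.cons_val_fin_one, Matrix.head_fin_const, Pi.single_apply, Matrix.vecHead, Matrix.vecTail, Function.comp, Fin.isValue, if_true, if_false, mul_one, mul_zero, one_mul, zero_mul, sub_zero, zero_sub, add_zero, zero_add, mul_neg, neg_zero, smul_zero, smul_eq_mul, neg_neg, neg_add_rev] at h057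
  have h016 := hc 0 1 6
  simp (config := { decide := true }) only [dForm, map_add, map_smul, map_zero, coef3_eee, Matrix.det_fin_three, Matrix.of_apply, Matrix.cons_val', Matrix.cons_val_zero, Matrix.cons_val_one, Matrix.cons_val_two, Matrix.cons_val_succ, Matrix.head_cons, Matrix.empty_val', Matrix.cons_val_fin_one, Matrix.head_fin_const, Pi.single_apply, Matrix.vecHead, Matrix.vecTail, Function.comp, Fin.isValue, if_true, if_false, mul_one, mul_zero, one_mul, zero_mul, sub_zero, zero_sub, add_zero, zero_add, mul_neg, neg_zero, smul_zero, smul_eq_mul, neg_neg, neg_add_rev] at h016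
  have h025 := hc 0 2 5
  simp (config := { decide := true }) only [dForm, map_add, map_smul, map_zero, coef3_eee, Matrix.det_fin_three, Matrix.of_apply, Matrix.cons_val', Matrix.cons_val_zero, Matrix.cons_val_one, Matrix.cons_val_two, Matrix.cons_val_succ, Matrix.head_cons, Matrix.empty_val', Matrix.cons_val_fin_one, Matrix.head_fin_const, Pi.single_apply, Matrix.vecHead, Matrix.vecTail, Function.comp, Fin.isValue, if_true, if_false, mul_one, mul_zero, one_mul, zero_mul, sub_zero, zero_sub, add_zero, zero_add, mul_neg, neg_zero, smul_zero, smul_eq_mul, neg_neg, neg_add_rev] at h025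
  have h034 := hc 0 3 4
  simp (config := { decide := true }) only [dForm, map_add, map_smul, map_zero, coef3_eee, Matrix.det_fin_three, Matrix.of_apply, Matrix.cons_val', Matrix.cons_val_zero, Matrix.cons_val_one, Matrix.cons_val_two, Matrix.cons_val_succ, Matrix.head_cons, Matrix.empty_val', Matrix.cons_val_fin_one, Matrix.head_fin_const, Pi.single_apply, Matrix.vecHead, Matrix.vecTail, Function.comp, Fin.isValue, if_true, if_false, mul_one, mul_zero, one_mul, zero_mul, sub_zero, zero_sub, add_zero, zero_add, mul_neg, neg_zero, smul_zero, smul_eq_mul, neg_neg, neg_add_rev] at h034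
  have h013 := hc 0 1 3
  simp (config := { decide := true }) only [dForm, map_add, map_smul, map_zero, coef3_eee, Matrix.det_fin_three, Matrix.of_apply, Matrix.cons_val', Matrix.cons_val_zero, Matrix.cons_val_one, Matrix.cons_val_two, Matrix.cons_val_succ, Matrix.head_cons, Matrix.empty_val', Matrix.cons_val_fin_one, Matrix.head_fin_const, Pi.single_apply, Matrix.vecHead, Matrix.vecTail, Function.comp, Fin.isValue, if_true, if_false, mul_one, mul_zero, one_mul, zero_mul, sub_zero, zero_sub, add_zero, zero_add, mul_neg, neg_zero, smul_zero, smul_eq_mul, neg_neg, neg_add_rev] at h013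
  have h015 := hc 0 1 5
  simp (config := { decide := true }) only [dForm, map_add, map_smul, map_zero, coef3_eee, Matrix.det_fin_three, Matrix.of_apply, Matrix.cons_val', Matrix.cons_val_zero, Matrix.cons_val_one, Matrix.cons_val_two, Matrix.cons_val_succ, Matrix.head_cons, Matrix.empty_val', Matrix.cons_val_fin_one, Matrix.head_fin_const, Pi.single_apply, Matrix.vecHead, Matrix.vecTail, Function.comp, Fin.isValue, if_true, if_false, mul_one, mul_zero, one_mul, zero_mul, sub_zero, zero_sub, add_zero, zero_add, mul_neg, neg_zero, smul_zero, smul_eq_mul, neg_neg, neg_add_rev] at h015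
  have h024 := hc 0 2 4
  simp (config := { decide := true }) only [dForm, map_add, map_smul, map_zero, coef3_eee, Matrix.det_fin_three, Matrix.of_apply, Matrix.cons_val', Matrix.cons_val_zero, Matrix.cons_val_one, Matrix.cons_val_two, Matrix.cons_val_succ, Matrix.head_cons, Matrix.empty_val', Matrix.cons_val_fin_one, Matrix.head_fin_const, Pi.single_apply, Matrix.vecHead, Matrix.vecTail, Function.comp, Fin.isValue, if_true, if_false, mul_one, mul_zero, one_mul, zero_mul, sub_zero, zero_sub, add_zero, zero_add, mul_neg, neg_zero, smul_zero, smul_eq_mul, neg_neg, neg_add_rev] at h024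
  have hA : twoForm k = Aform k := by
    simp only [twoForm, Fin.sum_univ_eight, e_sq, sw10, sw20, sw30, sw40, sw50, sw60, sw70, sw21, sw31, sw41, sw51, sw61, sw71, sw32, sw42, sw52, sw62, sw72, sw43, sw53, sw63, sw73, sw54, sw64, sw74, sw65, sw75, sw76, smul_zero, smul_neg]
    unfold Aform
    match_scalars <;> linarith [h012, h023, h014, h017, h125, h026, h027, h035, h036, h046, h037, h047, h057, h016, h025, h034, h013, h015, h024]
  have h4 : twoForm k ^ 4 = (twoForm k * twoForm k) * (twoForm k * twoForm k) := by
    rw [show (4 : ℕ) = 2 * 2 from rfl, pow_mul, pow_two, pow_two]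
  rw [h4, hA, AA_eq, CC_eq]

/-- every closed 2-form has vanishing fourth power; in particular
there is no symplectic form. -/
theorem closed_two_form_fourth_power_zero :
    (∀ k : Fin 8 → Fin 8 → ℝ, dTwo k = 0 → twoForm k ^ 4 = 0)
    ∧ ¬ ∃ k : Fin 8 → Fin 8 → ℝ, dTwo k = 0 ∧ twoForm k ^ 4 ≠ 0 := by
  refine ⟨main_aux, ?_⟩
  rintro ⟨k, hk, hne⟩
  exact hne (main_aux k hk)

end
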